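/- arXiv:2601.09034 — 2 statements merged into one kernel-verified Lean document; each statement's English description precedes it below -/
import Mathlib

section
/- Let P be a partially ordered set with a commutative flow T, let F, G : P → Set be functors, fix η ∈ [0,∞), and let (φ, ψ) be a T_η-assignment between F and G. For all p < r < q in P, if the map F[p ≤ r] : F(p) → F(r) is a bijection, then L_parL^{r,q}(φ) ≤ max{ L_parL^{p,r}(φ), L_parL^{p,q}(φ) }. -/
open scoped NNReal ENNReal

universe u v

/-- A commutative flow on a partially ordered set `P`. -/
structure CFlow (P : Type u) [PartialOrder P] where
  T : ℝ≥0 → P → P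
  mono : ∀ ε : ℝ≥0, Monotone (T ε)
  T_zero : ∀ p : P, T 0 p = p
  T_add : ∀ (ε δ : ℝ≥0) (p : P), T (ε + δ) p = T ε (T δ p)
  le_T : ∀ (ε : ℝ≥0) (p : P), p ≤ T ε p
  T_le_T : ∀ {ε δ : ℝ≥0} (p : P), ε ≤ δ → T ε p ≤ T δ p

/-- A functor `P → Set` for a poset `P`. -/
structure PosetFunctor (P : Type u) [PartialOrder P] where
  obj : P → Type v
  map : ∀ {p q : P}, p ≤ q → obj p → obj q
  map_id : ∀ (p : P) (a : obj p), map (le_refl p) a = a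
  map_comp : ∀ {p q r : P} (h₁ : p ≤ q) (h₂ : q ≤ r) (a : obj p),
      map h₂ (map h₁ a) = map (h₁.trans h₂) a

/-- The merging distance `d_q^F(a,b)`, valued in `[0,∞]`. -/
noncomputable def mergeDist {P : Type u} [PartialOrder P] (T : CFlow P)
    (F : PosetFunctor P) (q : P) (a b : F.obj q) : ℝ≥0∞ :=
  sInf {x : ℝ≥0∞ | ∃ ε : ℝ≥0, x = (ε : ℝ≥0∞) ∧
    F.map (T.le_T ε q) a = F.map (T.le_T ε q) b}

/-- The set `D_q^F` of reducing constants of `q` on `F`. -/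
def reducingSet {P : Type u} [PartialOrder P] (T : CFlow P)
    (F : PosetFunctor P) (q : P) : Set ℝ≥0 :=
  {δ | ∀ (γ₁ γ₂ : ℝ≥0) (h₁ : γ₁ < δ) (h₂ : δ ≤ γ₂),
    ¬ Function.Injective (F.map (T.T_le_T q (h₁.le.trans h₂)))}

/-- The left parallelogram loss `L_parL^{p,q}(φ)`. -/
noncomputable def LparL {P : Type u} [PartialOrder P] (T : CFlow P)
    (F G : PosetFunctor P) (η : ℝ≥0)
    (φ : ∀ p : P, F.obj p → G.obj (T.T η p)) {p q : P} (hpq : p ≤ q) : ℝ≥0∞ :=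
  ⨆ a : F.obj p, mergeDist T G (T.T η q)
    (φ q (F.map hpq a)) (G.map (T.mono η hpq) (φ p a))

/-- The right parallelogram loss `L_parR^{p,q}(ψ)`. -/
noncomputable def LparR {P : Type u} [PartialOrder P] (T : CFlow P)
    (F G : PosetFunctor P) (η : ℝ≥0)
    (ψ : ∀ p : P, G.obj p → F.obj (T.T η p)) {p q : P} (hpq : p ≤ q) : ℝ≥0∞ :=
  ⨆ b : G.obj p, mergeDist T F (T.T η q)
    (ψ q (G.map hpq b)) (F.map (T.mono η hpq) (ψ p b))

/-- The lower triangle loss `L_down^p(φ,ψ)`. -/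
noncomputable def Ldown {P : Type u} [PartialOrder P] (T : CFlow P)
    (F G : PosetFunctor P) (η : ℝ≥0)
    (φ : ∀ p : P, F.obj p → G.obj (T.T η p))
    (ψ : ∀ p : P, G.obj p → F.obj (T.T η p)) (p : P) : ℝ≥0∞ :=
  ⨆ a : F.obj p, mergeDist T F (T.T η (T.T η p))
    (ψ (T.T η p) (φ p a))
    (F.map ((T.le_T η p).trans (T.le_T η (T.T η p))) a)

/-- The upper triangle loss `L_up^p(φ,ψ)`. -/
noncomputable def Lup {P : Type u} [PartialOrder P] (T : CFlow P)
    (F G : PosetFunctor P) (η : ℝ≥0)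
    (φ : ∀ p : P, F.obj p → G.obj (T.T η p))
    (ψ : ∀ p : P, G.obj p → F.obj (T.T η p)) (p : P) : ℝ≥0∞ :=
  ⨆ b : G.obj p, mergeDist T G (T.T η (T.T η p))
    (φ (T.T η p) (ψ p b))
    (G.map ((T.le_T η p).trans (T.le_T η (T.T η p))) b)

lemma merge_mono {P : Type u} [PartialOrder P] (T : CFlow P)
    (F : PosetFunctor P) (q : P) (a b : F.obj q) {ε ε' : ℝ≥0} (h : ε ≤ ε')
    (hm : F.map (T.le_T ε q) a = F.map (T.le_T ε q) b) :
    F.map (T.le_T ε' q) a = F.map (T.le_T ε' q) b := by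
  have h1 := F.map_comp (T.le_T ε q) (T.T_le_T q h) a
  have h2 := F.map_comp (T.le_T ε q) (T.T_le_T q h) b
  calc F.map (T.le_T ε' q) a = F.map (T.T_le_T q h) (F.map (T.le_T ε q) a) := h1.symm
    _ = F.map (T.T_le_T q h) (F.map (T.le_T ε q) b) := by rw [hm]
    _ = F.map (T.le_T ε' q) b := h2

lemma mergeDist_ultra {P : Type u} [PartialOrder P] (T : CFlow P)
    (F : PosetFunctor P) (q : P) (a b c : F.obj q) :
    mergeDist T F q a c ≤ max (mergeDist T F q a b) (mergeDist T F q b c) := by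
  by_contra hcon
  push_neg at hcon
  obtain ⟨x1, hx1, hlt1⟩ := sInf_lt_iff.mp (lt_of_le_of_lt (le_max_left _ _) hcon)
  obtain ⟨x2, hx2, hlt2⟩ := sInf_lt_iff.mp (lt_of_le_of_lt (le_max_right _ _) hcon)
  obtain ⟨ε1, rfl, hm1⟩ := hx1
  obtain ⟨ε2, rfl, hm2⟩ := hx2
  have hmem : ((max ε1 ε2 : ℝ≥0) : ℝ≥0∞) ∈ {x : ℝ≥0∞ | ∃ ε : ℝ≥0, x = (ε : ℝ≥0∞) ∧
      F.map (T.le_T ε q) a = F.map (T.le_T ε q) c} := by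
    refine ⟨max ε1 ε2, rfl, ?_⟩
    have ha := merge_mono T F q a b (le_max_left ε1 ε2) hm1
    have hb := merge_mono T F q b c (le_max_right ε1 ε2) hm2
    exact ha.trans hb
  have := sInf_le hmem
  have hlt : ((max ε1 ε2 : ℝ≥0) : ℝ≥0∞) < mergeDist T F q a c := by
    rw [ENNReal.coe_max]; exact max_lt hlt1 hlt2
  exact absurd (this.trans_lt hlt) (lt_irrefl _)

lemma mergeDist_map_le {P : Type u} [PartialOrder P] (T : CFlow P)
    (F : PosetFunctor P) {q q' : P} (h : q ≤ q') (u v : F.obj q) :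
    mergeDist T F q' (F.map h u) (F.map h v) ≤ mergeDist T F q u v := by
  apply sInf_le_sInf
  rintro x ⟨ε, rfl, hm⟩
  refine ⟨ε, rfl, ?_⟩
  have key : ∀ w : F.obj q, F.map (T.le_T ε q') (F.map h w)
      = F.map (T.mono ε h) (F.map (T.le_T ε q) w) := by
    intro w
    rw [F.map_comp, F.map_comp]
  rw [key u, key v, hm]

/-- If `F[p ≤ r]` is a bijection then, for `p < r < q`,
`L_parL^{r,q}(φ) ≤ max { L_parL^{p,r}(φ), L_parL^{p,q}(φ) }`. -/
theorem LparL_le_max_of_bijective {P : Type u} [PartialOrder P]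
    (T : CFlow P) (F G : PosetFunctor P) (η : ℝ≥0)
    (φ : ∀ p : P, F.obj p → G.obj (T.T η p))
    (ψ : ∀ p : P, G.obj p → F.obj (T.T η p))
    (p r q : P) (hpr : p < r) (hrq : r < q)
    (hbij : Function.Bijective (F.map hpr.le)) :
    LparL T F G η φ hrq.le ≤
      max (LparL T F G η φ hpr.le) (LparL T F G η φ (hpr.le.trans hrq.le)) := by
  apply iSup_le
  intro a'
  obtain ⟨a, rfl⟩ := hbij.surjective a'
  set y := G.map (T.mono η (hpr.le.trans hrq.le)) (φ p a) with hy
  have hcomp : F.map hrq.le (F.map hpr.le a) = F.map (hpr.le.trans hrq.le) a :=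
    F.map_comp _ _ _
  have step1 : mergeDist T G (T.T η q) (φ q (F.map hrq.le (F.map hpr.le a))) y
      ≤ LparL T F G η φ (hpr.le.trans hrq.le) := by
    rw [hcomp]
    exact le_iSup (fun a => mergeDist T G (T.T η q)
      (φ q (F.map (hpr.le.trans hrq.le) a))
      (G.map (T.mono η (hpr.le.trans hrq.le)) (φ p a))) a
  have hyeq : y = G.map (T.mono η hrq.le) (G.map (T.mono η hpr.le) (φ p a)) :=
    (G.map_comp _ _ _).symm
  have step2 : mergeDist T G (T.T η q) y
      (G.map (T.mono η hrq.le) (φ r (F.map hpr.le a)))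
      ≤ LparL T F G η φ hpr.le := by
    rw [hyeq]
    refine le_trans ?_ (le_iSup (fun a => mergeDist T G (T.T η r)
      (φ r (F.map hpr.le a)) (G.map (T.mono η hpr.le) (φ p a))) a)
    have := mergeDist_map_le T G (T.mono η hrq.le)
      (G.map (T.mono η hpr.le) (φ p a)) (φ r (F.map hpr.le a))
    refine le_trans this (le_of_eq ?_)
    unfold mergeDist
    congr 1
    ext x
    constructor <;> rintro ⟨ε, rfl, hm⟩ <;> exact ⟨ε, rfl, hm.symm⟩
  calc mergeDist T G (T.T η q) (φ q (F.map hrq.le (F.map hpr.le a)))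
        (G.map (T.mono η hrq.le) (φ r (F.map hpr.le a)))
      ≤ max (mergeDist T G (T.T η q) (φ q (F.map hrq.le (F.map hpr.le a))) y)
          (mergeDist T G (T.T η q) y
            (G.map (T.mono η hrq.le) (φ r (F.map hpr.le a)))) :=
        mergeDist_ultra T G _ _ _ _
    _ ≤ max (LparL T F G η φ (hpr.le.trans hrq.le)) (LparL T F G η φ hpr.le) :=
        max_le_max step1 step2
    _ = max (LparL T F G η φ hpr.le) (LparL T F G η φ (hpr.le.trans hrq.le)) :=
        max_comm _ _
end

section
/- Let P be a partially ordered set with a commutative flow T, let F, G : P → Set be functors, fix η ∈ [0,∞), and let (φ, ψ) be a T_η-assignment between F and G. Let c < c' in P and write (c,c') := { x ∈ P : c < x < c' }. Suppose that for all s ≤ t in (c,c') the map F[s ≤ t] : F(s) → F(t) is a bijection, and that L_parL^{s,t}(φ) = 0 for all s < t in (c,c'). Then for all s < t in (c,c'), L_parL^{s,c'}(φ) = L_parL^{t,c'}(φ). -/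
open scoped NNReal ENNReal

universe u v

/-!
The merging distance is an ultrametric that does not grow under the maps of `G`. Hence, when
`L_parL^{s,t}(φ) = 0`, the term of `L_parL^{s,c'}(φ)` at `a` equals the term of `L_parL^{t,c'}(φ)`
at `F[s ≤ t] a`, and surjectivity of `F[s ≤ t]` turns this into equality of the suprema.
-/

section MergeDist

variable {P : Type u} [PartialOrder P] (T : CFlow P) (F : PosetFunctor P)

lemma mergeDist_le_of_map_eq {q : P} {a b : F.obj q} {ε : ℝ≥0}
    (h : F.map (T.le_T ε q) a = F.map (T.le_T ε q) b) :
    mergeDist T F q a b ≤ ε :=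
  sInf_le ⟨ε, rfl, h⟩

lemma map_eq_of_mergeDist_lt {q : P} {a b : F.obj q} {ε : ℝ≥0}
    (h : mergeDist T F q a b < ε) :
    F.map (T.le_T ε q) a = F.map (T.le_T ε q) b := by
  obtain ⟨_, ⟨δ, rfl, hδ⟩, hδε⟩ := sInf_lt_iff.mp h
  have hle : T.T δ q ≤ T.T ε q := T.T_le_T q (by exact_mod_cast hδε.le)
  rw [← F.map_comp (T.le_T δ q) hle, ← F.map_comp (T.le_T δ q) hle, hδ]

lemma mergeDist_comm {q : P} (a b : F.obj q) :
    mergeDist T F q a b = mergeDist T F q b a := by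
  simp only [mergeDist, eq_comm (a := F.map _ a)]

lemma mergeDist_le_max {q : P} (u v w : F.obj q) :
    mergeDist T F q u w ≤ max (mergeDist T F q u v) (mergeDist T F q v w) := by
  by_contra! h
  obtain ⟨ε, hmax, hε⟩ := ENNReal.lt_iff_exists_nnreal_btwn.mp h
  rw [max_lt_iff] at hmax
  have huw := (map_eq_of_mergeDist_lt T F hmax.1).trans (map_eq_of_mergeDist_lt T F hmax.2)
  exact (mergeDist_le_of_map_eq T F huw).not_gt hε

lemma mergeDist_congr_right_of_eq_zero {q : P} (u : F.obj q) {v w : F.obj q}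
    (h : mergeDist T F q v w = 0) :
    mergeDist T F q u v = mergeDist T F q u w := by
  apply le_antisymm
  · simpa [mergeDist_comm T F w v, h] using mergeDist_le_max T F u w v
  · simpa [h] using mergeDist_le_max T F u v w

lemma mergeDist_map_le_s11 {q r : P} (h : q ≤ r) (a b : F.obj q) :
    mergeDist T F r (F.map h a) (F.map h b) ≤ mergeDist T F q a b := by
  refine sInf_le_sInf ?_
  rintro _ ⟨ε, rfl, hε⟩
  refine ⟨ε, rfl, ?_⟩
  have hsquare : ∀ z : F.obj q,
      F.map (T.le_T ε r) (F.map h z) = F.map (T.mono ε h) (F.map (T.le_T ε q) z) := by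
    intro z
    rw [F.map_comp, F.map_comp]
  rw [hsquare, hsquare, hε]

end MergeDist

section LparL

variable {P : Type u} [PartialOrder P] (T : CFlow P) (F G : PosetFunctor P) (η : ℝ≥0)
  (φ : ∀ p : P, F.obj p → G.obj (T.T η p))

lemma mergeDist_eq_zero_of_LparL_eq_zero {p q : P} {hpq : p ≤ q}
    (h : LparL T F G η φ hpq = 0) (a : F.obj p) :
    mergeDist T G (T.T η q) (φ q (F.map hpq a)) (G.map (T.mono η hpq) (φ p a)) = 0 :=
  ENNReal.iSup_eq_zero.mp h a

lemma LparL_eq_of_LparL_eq_zero {p q r : P} (hpq : p ≤ q) (hqr : q ≤ r)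
    (hsurj : Function.Surjective (F.map hpq)) (hzero : LparL T F G η φ hpq = 0) :
    LparL T F G η φ (hpq.trans hqr) = LparL T F G η φ hqr := by
  have hterm : ∀ a : F.obj p,
      mergeDist T G (T.T η r) (φ r (F.map (hpq.trans hqr) a))
          (G.map (T.mono η (hpq.trans hqr)) (φ p a)) =
        mergeDist T G (T.T η r) (φ r (F.map hqr (F.map hpq a)))
          (G.map (T.mono η hqr) (φ q (F.map hpq a))) := by
    intro a
    have hpush : mergeDist T G (T.T η r) (G.map (T.mono η hqr) (φ q (F.map hpq a)))
        (G.map (T.mono η hqr) (G.map (T.mono η hpq) (φ p a))) = 0 :=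
      nonpos_iff_eq_zero.mp <| (mergeDist_map_le_s11 T G _ _ _).trans
        (mergeDist_eq_zero_of_LparL_eq_zero T F G η φ hzero a).le
    rw [F.map_comp, mergeDist_congr_right_of_eq_zero T G _ hpush, G.map_comp]
  exact (iSup_congr hterm).trans <| hsurj.iSup_comp fun b =>
    mergeDist T G (T.T η r) (φ r (F.map hqr b)) (G.map (T.mono η hqr) (φ q b))

end LparL

theorem LparL_to_endpoint_const_general {P : Type u} [PartialOrder P]
    (T : CFlow P) (F G : PosetFunctor P) (η : ℝ≥0)
    (φ : ∀ p : P, F.obj p → G.obj (T.T η p))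
    (c c' : P)
    (hbij : ∀ s t : P, c < s → s < c' → c < t → t < c' → ∀ h : s ≤ t,
      Function.Bijective (F.map h))
    (hzero : ∀ s t : P, c < s → s < c' → c < t → t < c' → ∀ h : s < t,
      LparL T F G η φ h.le = 0) :
    ∀ s t : P, ∀ hcs : c < s, ∀ hsc : s < c', ∀ hct : c < t, ∀ htc : t < c',
      s < t → LparL T F G η φ hsc.le = LparL T F G η φ htc.le := by
  intro s t hcs hsc hct htc hst
  exact LparL_eq_of_LparL_eq_zero T F G η φ hst.le htc.le
    (hbij s t hcs hsc hct htc hst.le).2 (hzero s t hcs hsc hct htc hst)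

/-- If `(c, c')` is a constant interval for `F` on which the left parallelogram losses
vanish, then all losses `L_parL^{s,c'}(φ)` for `s ∈ (c,c')` agree. -/
theorem LparL_to_endpoint_const {P : Type u} [PartialOrder P]
    (T : CFlow P) (F G : PosetFunctor P) (η : ℝ≥0)
    (φ : ∀ p : P, F.obj p → G.obj (T.T η p))
    (ψ : ∀ p : P, G.obj p → F.obj (T.T η p))
    (c c' : P) (hcc : c < c')
    (hbij : ∀ s t : P, c < s → s < c' → c < t → t < c' → ∀ h : s ≤ t,
      Function.Bijective (F.map h))
    (hzero : ∀ s t : P, c < s → s < c' → c < t → t < c' → ∀ h : s < t,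
      LparL T F G η φ h.le = 0) :
    ∀ s t : P, ∀ hcs : c < s, ∀ hsc : s < c', ∀ hct : c < t, ∀ htc : t < c',
      s < t → LparL T F G η φ hsc.le = LparL T F G η φ htc.le :=
  LparL_to_endpoint_const_general T F G η φ c c' hbij hzero
end
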